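/- Let G₀ = (V,E) be a simple graph and let G₀, G₁, …, G_t be a sequence of graphs in which, for each i, the graph G_{i+1} is the gadget extension of G_i at some edge of G_i. Then α(G_t) = α(G₀) + t. -/
import Mathlib


/-- A set of vertices is independent if no two of its vertices are adjacent. -/
def IsIndepSet {V : Type*} (G : SimpleGraph V) (s : Set V) : Prop :=
  s.Pairwise fun x y => ¬ G.Adj x y

/-- The independence number: the maximum size of an independent set. -/
noncomputable def indepNum {V : Type*} (G : SimpleGraph V) : ℕ :=
  sSup {n : ℕ | ∃ s : Set V, IsIndepSet G s ∧ s.ncard = n}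

/-- The gadget extension of `G` at the edge `uv`: add three new vertices
`a = Sum.inr 0`, `b = Sum.inr 1`, `c = Sum.inr 2` and the six new edges
`ab, bc, ca, au, bu, bv`. -/
def gadget {V : Type*} (G : SimpleGraph V) (u v : V) : SimpleGraph (V ⊕ Fin 3) :=
  SimpleGraph.fromEdgeSet
    ((Sym2.map Sum.inl '' G.edgeSet) ∪
      {s(Sum.inr 0, Sum.inr 1), s(Sum.inr 1, Sum.inr 2), s(Sum.inr 2, Sum.inr 0),
       s(Sum.inr 0, Sum.inl u), s(Sum.inr 1, Sum.inl u), s(Sum.inr 1, Sum.inl v)})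

section aux
variable {V W : Type*}

lemma bdd {G : SimpleGraph V} [Fintype V] :
    BddAbove {n : ℕ | ∃ s : Set V, IsIndepSet G s ∧ s.ncard = n} := by
  refine ⟨Fintype.card V, fun n hn => ?_⟩
  obtain ⟨s, _, rfl⟩ := hn
  calc s.ncard ≤ (Set.univ : Set V).ncard :=
        Set.ncard_le_ncard (Set.subset_univ s) Set.finite_univ
    _ = Fintype.card V := by simp [Set.ncard_univ, Nat.card_eq_fintype_card]

lemma indepNum_le {G : SimpleGraph V} [Fintype V] {s : Set V} (hs : IsIndepSet G s) :
    s.ncard ≤ indepNum G :=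
  le_csSup bdd ⟨s, hs, rfl⟩

lemma exists_indep (G : SimpleGraph V) [Fintype V] :
    ∃ s : Set V, IsIndepSet G s ∧ s.ncard = indepNum G := 
by
  have h0 : 0 ∈ {n : ℕ | ∃ s : Set V, IsIndepSet G s ∧ s.ncard = n} :=
    ⟨∅, Set.pairwise_empty _, by simp⟩
  exact Nat.sSup_mem ⟨0, h0⟩ bdd

lemma gadget_adj_inl {G : SimpleGraph V} {u v x y : V} :
    (gadget G u v).Adj (Sum.inl x) (Sum.inl y) ↔ G.Adj x y := by
  constructor
  · rintro ⟨h, hne⟩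
    rcases h with ⟨e, he, hmap⟩ | h
    · induction e using Sym2.ind with
      | _ a b =>
        simp only [Sym2.map_pair_eq, Sym2.eq, Sym2.rel_iff', Prod.mk.injEq,
          Sum.inl.injEq, Prod.swap_prod_mk] at hmap
        rcases hmap with ⟨rfl, rfl⟩ | ⟨rfl, rfl⟩
        · exact he
        · exact (SimpleGraph.adj_symm G he : _)
    · simp at h
  · intro h
    refine ⟨Or.inl ⟨s(x, y), h, by simp⟩, by simpa using h.ne⟩


lemma gadget_adj_inr {G : SimpleGraph V} {u v : V} {i j : Fin 3} (h : i ≠ j) :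
    (gadget G u v).Adj (Sum.inr i) (Sum.inr j) := by
  refine ⟨Or.inr ?_, by simpa using h⟩
  fin_cases i <;> fin_cases j <;> simp_all [Sym2.eq_swap]

lemma gadget_not_adj_c {G : SimpleGraph V} {u v : V} {x : V} :
    ¬ (gadget G u v).Adj (Sum.inr 2) (Sum.inl x) := by
  rintro ⟨h, -⟩
  rcases h with ⟨e, he, hmap⟩ | h
  · induction e using Sym2.ind with
    | _ a b => simp [Sym2.map_pair_eq, Sym2.eq, Sym2.rel_iff', Prod.ext_iff] at hmap
  · simp [Sym2.eq, Sym2.rel_iff', Prod.ext_iff] at h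

lemma gadget_indepNum {G : SimpleGraph V} [Fintype V] (u v : V) :
    indepNum (gadget G u v) = indepNum G + 1 := by
  apply le_antisymm
  · obtain ⟨S, hS, hcard⟩ := exists_indep (gadget G u v)
    rw [← hcard]
    set T : Set V := Sum.inl ⁻¹' S with hT
    have hTind : IsIndepSet G T := by
      intro x hx y hy hne hadj
      exact hS hx hy (by simpa using hne) (gadget_adj_inl.2 hadj)
    have hsub : S ⊆ (Sum.inl '' T) ∪ (S ∩ Set.range Sum.inr) := by
      rintro (x | i) hx
      · exact Or.inl ⟨x, hx, rfl⟩
      · exact Or.inr ⟨hx, ⟨i, rfl⟩⟩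
    have hone : (S ∩ Set.range Sum.inr).ncard ≤ 1 := by
      rw [Set.ncard_le_one (Set.toFinite _)]
      rintro a ⟨ha, i, rfl⟩ b ⟨hb, j, rfl⟩
      by_contra hne
      exact hS ha hb hne (gadget_adj_inr (by simpa using hne))
    calc S.ncard ≤ ((Sum.inl '' T) ∪ (S ∩ Set.range Sum.inr)).ncard :=
          Set.ncard_le_ncard hsub (Set.toFinite _)
      _ ≤ (Sum.inl '' T).ncard + (S ∩ Set.range Sum.inr).ncard := Set.ncard_union_le _ _
      _ ≤ T.ncard + 1 := by
          rw [Set.ncard_image_of_injective _ Sum.inl_injective]; omega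
      _ ≤ indepNum G + 1 := by
          have := indepNum_le hTind; omega
  · obtain ⟨s, hs, hcard⟩ := exists_indep G
    have hmem : (Sum.inr 2 : V ⊕ Fin 3) ∉ Sum.inl '' s := by simp
    have hind : IsIndepSet (gadget G u v) (insert (Sum.inr 2) (Sum.inl '' s)) := by
      rintro a ha b hb hne hadj
      rcases ha with rfl | ⟨x, hx, rfl⟩ <;> rcases hb with rfl | ⟨y, hy, rfl⟩
      · exact hne rfl
      · exact gadget_not_adj_c hadj
      · exact gadget_not_adj_c hadj.symm
      · exact hs hx hy (by simpa using hne) (gadget_adj_inl.1 hadj)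
    have := indepNum_le hind
    rw [Set.ncard_insert_of_notMem hmem (Set.toFinite _),
      Set.ncard_image_of_injective _ Sum.inl_injective, hcard] at this
    exact this

lemma indep_map {G : SimpleGraph V} {G' : SimpleGraph W} (f : G ≃g G') (n : ℕ) :
    (∃ s : Set V, IsIndepSet G s ∧ s.ncard = n) →
    (∃ s : Set W, IsIndepSet G' s ∧ s.ncard = n) := by
  rintro ⟨s, hs, rfl⟩
  refine ⟨f '' s, ?_, Set.ncard_image_of_injective _ f.injective⟩
  rintro - ⟨x, hx, rfl⟩ - ⟨y, hy, rfl⟩ hne hadj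
  exact hs hx hy (fun h => hne (by rw [h])) (f.map_adj_iff.1 hadj)

lemma indepNum_iso {G : SimpleGraph V} {G' : SimpleGraph W} (e : G ≃g G') :
    indepNum G = indepNum G' := by
  unfold indepNum
  congr 1
  ext n
  simp only [Set.mem_setOf_eq]
  exact ⟨indep_map e n, indep_map e.symm n⟩

end aux
theorem clar_stmt_5 {t : ℕ} (V : Fin (t + 1) → Type*) [∀ i, Fintype (V i)]
    (G : ∀ i, SimpleGraph (V i))
    (hstep : ∀ i : Fin t, ∃ u v : V i.castSucc, (G i.castSucc).Adj u v ∧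
      Nonempty (G i.succ ≃g gadget (G i.castSucc) u v)) :
    indepNum (G (Fin.last t)) = indepNum (G 0) + t := by
  have key : ∀ i : Fin (t + 1), indepNum (G i) = indepNum (G 0) + i.val := by
    intro i
    induction i using Fin.induction with
    | zero => simp
    | succ j ih =>
      obtain ⟨u, v, -, ⟨e⟩⟩ := hstep j
      rw [indepNum_iso e, gadget_indepNum, ih]
      simp [Fin.val_succ]
      omega
  simpa using key (Fin.last t)
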